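/- arXiv:2211.02399 — 7 statements merged into one kernel-verified Lean document; each statement's English description precedes it below -/
import Mathlib

section
/- (Reverse Chernoff bound) For positive integers l, z with l ≤ z - 1 and 0 < ν < 1, we have B_{z,l}(ν) ≥ (1/(e√l)) · exp(-z · D(l/z ∥ ν)). -/
/-!
The binomial CDF is at least its last term `C(z,l) ν^l (1-ν)^m`, where `m = z - l`, while
`exp(-z D(l/z ‖ ν)) = (zν/l)^l (z(1-ν)/m)^m`. So it suffices that
`z^z ≤ e √l l^l m^m C(z,l)`. Writing `C(z,l) = z!/(l! m!)`, this combines the Stirling-type bound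
`l! ≤ e √l (l/e)^l` (the Stirling sequence decreases from its value `e/√2` at `1`) with
`m! z^z ≤ z! m^m e^l`, which holds because `n^n/n!` grows by the factor `(1 + 1/n)^n ≤ e` per step.
-/

open Real Finset Nat

/-- Binomial CDF: `B z l p = ∑_{j=0}^{l} C(z,j) p^j (1-p)^{z-j}`. -/
noncomputable def binCDF (z l : ℕ) (p : ℝ) : ℝ :=
  ∑ j ∈ Finset.range (l + 1), (z.choose j : ℝ) * p ^ j * (1 - p) ^ (z - j)

/-- Binary relative entropy `D(p‖q)`. -/
noncomputable def relEnt (p q : ℝ) : ℝ :=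
  p * Real.log (p / q) + (1 - p) * Real.log ((1 - p) / (1 - q))

lemma add_one_pow_le_pow_mul_exp_one (n : ℕ) : ((n : ℝ) + 1) ^ n ≤ (n : ℝ) ^ n * exp 1 := by
  rcases Nat.eq_zero_or_pos n with rfl | hn
  · simp [one_le_exp zero_le_one]
  · calc ((n : ℝ) + 1) ^ n = (n : ℝ) ^ n * (1 + (n : ℝ)⁻¹) ^ n := by
          rw [← mul_pow, mul_add, mul_inv_cancel₀ (by positivity), mul_one]
      _ ≤ (n : ℝ) ^ n * exp 1 := by gcongr; exact one_add_inv_pow_le_exp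

lemma factorial_mul_pow_le (m l : ℕ) :
    (m ! : ℝ) * ((m + l : ℕ) : ℝ) ^ (m + l) ≤ ((m + l)! : ℝ) * (m : ℝ) ^ m * exp l := by
  induction l with
  | zero => simp
  | succ l ih =>
    have step := add_one_pow_le_pow_mul_exp_one (m + l)
    calc (m ! : ℝ) * ((m + (l + 1) : ℕ) : ℝ) ^ (m + (l + 1))
        = (m ! : ℝ) * (((m + l : ℕ) : ℝ) + 1) ^ (m + l) * (((m + l : ℕ) : ℝ) + 1) := by
          push_cast; ring
      _ ≤ (m ! : ℝ) * (((m + l : ℕ) : ℝ) ^ (m + l) * exp 1) * (((m + l : ℕ) : ℝ) + 1) := by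
          gcongr
      _ = (m ! : ℝ) * ((m + l : ℕ) : ℝ) ^ (m + l) * exp 1 * (((m + l : ℕ) : ℝ) + 1) := by ring
      _ ≤ ((m + l)! : ℝ) * (m : ℝ) ^ m * exp l * exp 1 * (((m + l : ℕ) : ℝ) + 1) := by gcongr
      _ = ((m + (l + 1))! : ℝ) * (m : ℝ) ^ m * exp ((l + 1 : ℕ) : ℝ) := by
          rw [← add_assoc, factorial_succ]; push_cast; rw [exp_add]; ring

lemma factorial_le_exp_one_mul_sqrt_mul_pow {l : ℕ} (hl : l ≠ 0) :
    (l ! : ℝ) ≤ exp 1 * √l * ((l : ℝ) / exp 1) ^ l := by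
  have hmono : Stirling.stirlingSeq l ≤ Stirling.stirlingSeq 1 := by
    obtain ⟨k, rfl⟩ := Nat.exists_eq_succ_of_ne_zero hl
    exact Stirling.stirlingSeq'_antitone (Nat.zero_le k)
  rw [Stirling.stirlingSeq_one, Stirling.stirlingSeq, div_le_iff₀ (by positivity)] at hmono
  calc (l ! : ℝ) ≤ exp 1 / √2 * (√(2 * l) * ((l : ℝ) / exp 1) ^ l) := hmono
    _ = exp 1 * √l * ((l : ℝ) / exp 1) ^ l := by
        rw [sqrt_mul zero_le_two]; field_simp

lemma pow_le_exp_one_mul_sqrt_mul_choose {l : ℕ} (m : ℕ) (hl : l ≠ 0) :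
    ((l + m : ℕ) : ℝ) ^ (l + m) ≤
      exp 1 * √l * (l : ℝ) ^ l * (m : ℝ) ^ m * ((l + m).choose l : ℝ) := by
  have hA := factorial_mul_pow_le m l
  rw [add_comm m l] at hA
  have hB := factorial_le_exp_one_mul_sqrt_mul_pow hl
  have hfact : ((l + m)! : ℝ) = (l + m).choose l * l ! * m ! := by
    have := Nat.choose_mul_factorial_mul_factorial (Nat.le_add_right l m)
    rw [Nat.add_sub_cancel_left] at this
    exact_mod_cast this.symm
  refine le_of_mul_le_mul_left ?_ (by positivity : (0 : ℝ) < l ! * m !)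
  calc (l ! * m ! : ℝ) * ((l + m : ℕ) : ℝ) ^ (l + m)
      = l ! * (m ! * ((l + m : ℕ) : ℝ) ^ (l + m)) := by ring
    _ ≤ (exp 1 * √l * ((l : ℝ) / exp 1) ^ l) * ((l + m)! * (m : ℝ) ^ m * exp l) := by
        gcongr
    _ = (l ! * m ! : ℝ) * (exp 1 * √l * (l : ℝ) ^ l * (m : ℝ) ^ m * ((l + m).choose l : ℝ)) := by
        rw [hfact, div_pow, ← exp_one_pow]; field_simp

lemma exp_neg_mul_relEnt {l m : ℕ} (hl : l ≠ 0) (hm : m ≠ 0) {ν : ℝ} (hν0 : 0 < ν)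
    (hν1 : ν < 1) :
    exp (-((l + m : ℕ) : ℝ) * relEnt ((l : ℝ) / ((l + m : ℕ) : ℝ)) ν) =
      (ν * ((l + m : ℕ) : ℝ) / l) ^ l * ((1 - ν) * ((l + m : ℕ) : ℝ) / m) ^ m := by
  have hlog : -((l + m : ℕ) : ℝ) * relEnt ((l : ℝ) / ((l + m : ℕ) : ℝ)) ν =
      l * log (ν * ((l + m : ℕ) : ℝ) / l) + m * log ((1 - ν) * ((l + m : ℕ) : ℝ) / m) := by
    have hcompl : 1 - (l : ℝ) / ((l + m : ℕ) : ℝ) = m / ((l + m : ℕ) : ℝ) := by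
      push_cast; field_simp; ring
    have hz : ((l + m : ℕ) : ℝ) ≠ 0 := by positivity
    have flip (a b : ℝ) : log (a / b) = -log (b / a) := by rw [← log_inv, inv_div]
    rw [relEnt, hcompl, flip (l / _), flip (m / _), div_div_eq_mul_div, div_div_eq_mul_div]
    field_simp
    ring
  rw [hlog, exp_add, exp_nat_mul, exp_nat_mul, exp_log (by positivity), exp_log (by positivity)]

lemma choose_mul_pow_mul_pow_le_binCDF (z l : ℕ) {ν : ℝ} (hν0 : 0 ≤ ν) (hν1 : ν ≤ 1) :
    (z.choose l : ℝ) * ν ^ l * (1 - ν) ^ (z - l) ≤ binCDF z l ν :=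
  single_le_sum (f := fun j => (z.choose j : ℝ) * ν ^ j * (1 - ν) ^ (z - j))
    (fun j _ => by positivity) (self_mem_range_succ l)

theorem stmt_2_general (z l : ℕ) (ν : ℝ) (hl : 1 ≤ l) (hlz : l ≤ z - 1)
    (hν0 : 0 < ν) (hν1 : ν < 1) :
    (1 / (Real.exp 1 * Real.sqrt l)) *
        Real.exp (-(z : ℝ) * relEnt ((l : ℝ) / (z : ℝ)) ν)
      ≤ binCDF z l ν := by
  obtain ⟨m, rfl⟩ : ∃ m, z = l + m := ⟨z - l, by omega⟩
  have hl0 : l ≠ 0 := by omega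
  have hm0 : m ≠ 0 := by omega
  have hchoose := pow_le_exp_one_mul_sqrt_mul_choose m hl0
  have hbin := choose_mul_pow_mul_pow_le_binCDF (l + m) l hν0.le hν1.le
  rw [exp_neg_mul_relEnt hl0 hm0 hν0 hν1]
  rw [Nat.add_sub_cancel_left] at hbin
  refine le_trans ?_ hbin
  set z : ℝ := ((l + m : ℕ) : ℝ)
  calc 1 / (exp 1 * √l) * ((ν * z / l) ^ l * ((1 - ν) * z / m) ^ m)
      = z ^ (l + m) / (exp 1 * √l * (l : ℝ) ^ l * (m : ℝ) ^ m) * (ν ^ l * (1 - ν) ^ m) := by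
        rw [div_pow, div_pow, mul_pow, mul_pow, pow_add]; field_simp
    _ ≤ ((l + m).choose l : ℝ) * (ν ^ l * (1 - ν) ^ m) := by
        gcongr
        rw [div_le_iff₀ (by positivity)]
        linarith
    _ = ((l + m).choose l : ℝ) * ν ^ l * (1 - ν) ^ m := by ring

theorem stmt_2 (z l : ℕ) (ν : ℝ) (hl : 1 ≤ l) (hlz : l ≤ z - 1) (hz : 1 ≤ z)
    (hν0 : 0 < ν) (hν1 : ν < 1) :
    (1 / (Real.exp 1 * Real.sqrt l)) *
        Real.exp (-(z : ℝ) * relEnt ((l : ℝ) / (z : ℝ)) ν)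
      ≤ binCDF z l ν :=
  stmt_2_general z l ν hl hlz hν0 hν1
end

section
/- For 0 < λ < 1 and integers 0 ≤ l ≤ z, setting ν = 1-λ, the ratio B_{z,l}(ν)/B_{z+1,l}(ν) is nondecreasing in z and satisfies (z-l+1)/((z+1)λ) ≤ B_{z,l}(ν)/B_{z+1,l}(ν) ≤ 1/λ. -/
open Finset

noncomputable def binTerm (z j : ℕ) (p : ℝ) : ℝ :=
  (z.choose j : ℝ) * p ^ j * (1 - p) ^ (z - j)

lemma binCDF_eq_sum_binTerm (z l : ℕ) (p : ℝ) :
    binCDF z l p = ∑ j ∈ range (l + 1), binTerm z j p := rfl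

lemma binCDF_succ_right (z l : ℕ) (p : ℝ) :
    binCDF z (l + 1) p = binCDF z l p + binTerm z (l + 1) p := by
  rw [binCDF_eq_sum_binTerm, binCDF_eq_sum_binTerm, sum_range_succ]

lemma binTerm_eq_zero_of_lt {z j : ℕ} (h : z < j) (p : ℝ) : binTerm z j p = 0 := by
  simp [binTerm, Nat.choose_eq_zero_of_lt h]

lemma binTerm_self (z : ℕ) (p : ℝ) : binTerm z z p = p ^ z := by
  simp [binTerm]

lemma binTerm_nonneg {p : ℝ} (hp0 : 0 ≤ p) (hp1 : p ≤ 1) (z j : ℕ) :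
    0 ≤ binTerm z j p := by
  have : 0 ≤ 1 - p := by linarith
  unfold binTerm
  positivity

lemma binCDF_pos {p : ℝ} (hp0 : 0 ≤ p) (hp1 : p < 1) (z l : ℕ) : 0 < binCDF z l p := by
  have hzero : 0 < binTerm z 0 p := by
    simpa [binTerm] using pow_pos (sub_pos.mpr hp1) z
  rw [binCDF_eq_sum_binTerm]
  exact sum_pos' (fun j _ ↦ binTerm_nonneg hp0 hp1.le z j) ⟨0, by simp, hzero⟩

lemma binTerm_le_binCDF {p : ℝ} (hp0 : 0 ≤ p) (hp1 : p ≤ 1) (z l : ℕ) :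
    binTerm z l p ≤ binCDF z l p :=
  single_le_sum (fun j _ ↦ binTerm_nonneg hp0 hp1 z j) (self_mem_range_succ l)

lemma binTerm_succ_succ (z j : ℕ) (p : ℝ) :
    binTerm (z + 1) (j + 1) p = p * binTerm z j p + (1 - p) * binTerm z (j + 1) p := by
  rcases lt_trichotomy j z with hjz | rfl | hzj
  · obtain ⟨k, rfl⟩ := Nat.exists_eq_add_of_lt hjz
    simp only [binTerm, Nat.choose_succ_succ, Nat.cast_add]
    rw [show j + k + 1 + 1 - (j + 1) = k + 1 by omega, show j + k + 1 - j = k + 1 by omega,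
      show j + k + 1 - (j + 1) = k by omega]
    ring
  · rw [binTerm_self, binTerm_self, binTerm_eq_zero_of_lt (Nat.lt_succ_self j)]
    ring
  · rw [binTerm_eq_zero_of_lt (by omega), binTerm_eq_zero_of_lt hzj,
      binTerm_eq_zero_of_lt (by omega)]
    ring

lemma binCDF_succ_left (z l : ℕ) (p : ℝ) :
    binCDF (z + 1) l p = binCDF z l p - p * binTerm z l p := by
  induction l with
  | zero => simp [binCDF, binTerm, pow_succ]; ring
  | succ l ih => rw [binCDF_succ_right, binCDF_succ_right, ih, binTerm_succ_succ]; ring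

lemma Nat.choose_mul_choose_le_of_le {j l z₁ z₂ : ℕ} (hjl : j ≤ l) (hz : z₁ ≤ z₂) :
    z₁.choose l * z₂.choose j ≤ z₂.choose l * z₁.choose j := by
  refine Nat.le_of_mul_le_mul_right ?_ (Nat.choose_pos hjl)
  calc z₁.choose l * z₂.choose j * l.choose j
      = z₁.choose j * (z₁ - j).choose (l - j) * z₂.choose j := by
        rw [mul_right_comm, Nat.choose_mul hjl]
    _ ≤ z₁.choose j * (z₂ - j).choose (l - j) * z₂.choose j := by
        gcongr
    _ = z₂.choose l * z₁.choose j * l.choose j := by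
        rw [mul_right_comm (z₂.choose l), Nat.choose_mul hjl]; ring

lemma binTerm_mul_binTerm_le {p : ℝ} (hp0 : 0 ≤ p) (hp1 : p ≤ 1) {j l z₁ z₂ : ℕ}
    (hjl : j ≤ l) (hz : z₁ ≤ z₂) :
    binTerm z₁ l p * binTerm z₂ j p ≤ binTerm z₂ l p * binTerm z₁ j p := by
  rcases lt_or_ge z₁ l with hlz | hlz
  · rw [binTerm_eq_zero_of_lt hlz, zero_mul]
    exact mul_nonneg (binTerm_nonneg hp0 hp1 _ _) (binTerm_nonneg hp0 hp1 _ _)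
  have hexp : z₁ - l + (z₂ - j) = z₂ - l + (z₁ - j) := by omega
  have hq : 0 ≤ 1 - p := by linarith
  calc binTerm z₁ l p * binTerm z₂ j p
      = (z₁.choose l * z₂.choose j : ℕ) *
          (p ^ (l + j) * (1 - p) ^ (z₁ - l + (z₂ - j))) := by
        simp only [binTerm, pow_add]; push_cast; ring
    _ ≤ (z₂.choose l * z₁.choose j : ℕ) *
          (p ^ (l + j) * (1 - p) ^ (z₂ - l + (z₁ - j))) := by
        rw [hexp]
        exact mul_le_mul_of_nonneg_right (mod_cast Nat.choose_mul_choose_le_of_le hjl hz)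
          (by positivity)
    _ = binTerm z₂ l p * binTerm z₁ j p := by
        simp only [binTerm, pow_add]; push_cast; ring

lemma binTerm_mul_binCDF_le {p : ℝ} (hp0 : 0 ≤ p) (hp1 : p ≤ 1) {l z₁ z₂ : ℕ}
    (hz : z₁ ≤ z₂) :
    binTerm z₁ l p * binCDF z₂ l p ≤ binTerm z₂ l p * binCDF z₁ l p := by
  simp only [binCDF_eq_sum_binTerm, mul_sum]
  exact sum_le_sum fun j hj ↦
    binTerm_mul_binTerm_le hp0 hp1 (Nat.lt_succ_iff.mp (mem_range.mp hj)) hz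

lemma mul_sub_mul_binTerm (z j : ℕ) (p : ℝ) :
    p * ((z : ℝ) - j) * binTerm z j p = (1 - p) * ((j : ℝ) + 1) * binTerm z (j + 1) p := by
  rcases lt_trichotomy j z with hjz | rfl | hzj
  · obtain ⟨k, rfl⟩ := Nat.exists_eq_add_of_lt hjz
    have hchoose :
        ((j + k + 1).choose (j + 1) : ℝ) * (j + 1) = (j + k + 1).choose j * (k + 1) := by
      have h := Nat.choose_succ_right_eq (j + k + 1) j
      rw [show j + k + 1 - j = k + 1 by omega] at h
      exact_mod_cast h
    simp only [binTerm]
    rw [show j + k + 1 - j = k + 1 by omega, show j + k + 1 - (j + 1) = k by omega]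
    push_cast
    linear_combination (-(p ^ (j + 1) * (1 - p) ^ (k + 1))) * hchoose
  · rw [binTerm_eq_zero_of_lt (Nat.lt_succ_self j)]
    ring
  · rw [binTerm_eq_zero_of_lt hzj, binTerm_eq_zero_of_lt (by omega)]
    ring

lemma mul_sum_range_binTerm_le {p : ℝ} (hp0 : 0 ≤ p) (hp1 : p ≤ 1) (z l : ℕ) :
    p * ((z : ℝ) - l + 1) * ∑ j ∈ range l, binTerm z j p ≤ (1 - p) * l * binCDF z l p := by
  have hnonneg := binTerm_nonneg hp0 hp1 z
  calc p * ((z : ℝ) - l + 1) * ∑ j ∈ range l, binTerm z j p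
      = ∑ j ∈ range l, p * ((z : ℝ) - l + 1) * binTerm z j p := mul_sum _ _ _
    _ ≤ ∑ j ∈ range l, p * ((z : ℝ) - j) * binTerm z j p := by
        gcongr with j hj
        · exact hnonneg j
        · have : (j : ℝ) + 1 ≤ l := mod_cast mem_range.mp hj
          linarith
    _ = ∑ j ∈ range l, (1 - p) * ((j : ℝ) + 1) * binTerm z (j + 1) p :=
        sum_congr rfl fun j _ ↦ mul_sub_mul_binTerm z j p
    _ ≤ ∑ j ∈ range l, (1 - p) * (l : ℝ) * binTerm z (j + 1) p := by
        gcongr with j hj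
        · exact hnonneg (j + 1)
        · exact mod_cast mem_range.mp hj
    _ = (1 - p) * l * (binCDF z l p - binTerm z 0 p) := by
        rw [binCDF_eq_sum_binTerm, sum_range_succ', add_sub_cancel_right, mul_sum]
    _ ≤ (1 - p) * l * binCDF z l p := by
        gcongr
        linarith [hnonneg 0]

lemma monotone_binCDF_div_binCDF_succ {p : ℝ} (hp0 : 0 ≤ p) (hp1 : p < 1) (l : ℕ) :
    Monotone fun z ↦ binCDF z l p / binCDF (z + 1) l p := by
  intro z₁ z₂ hz
  rw [div_le_div_iff₀ (binCDF_pos hp0 hp1 _ _) (binCDF_pos hp0 hp1 _ _),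
    binCDF_succ_left, binCDF_succ_left]
  linear_combination mul_le_mul_of_nonneg_left (binTerm_mul_binCDF_le hp0 hp1.le (l := l) hz) hp0

lemma binCDF_div_binCDF_succ_le {p : ℝ} (hp0 : 0 ≤ p) (hp1 : p < 1) (z l : ℕ) :
    binCDF z l p / binCDF (z + 1) l p ≤ 1 / (1 - p) := by
  rw [div_le_div_iff₀ (binCDF_pos hp0 hp1 _ _) (sub_pos.mpr hp1), binCDF_succ_left]
  linear_combination mul_le_mul_of_nonneg_left (binTerm_le_binCDF hp0 hp1.le z l) hp0

lemma le_binCDF_div_binCDF_succ {p : ℝ} (hp0 : 0 ≤ p) (hp1 : p < 1) (z l : ℕ) :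
    ((z : ℝ) - l + 1) / ((z + 1) * (1 - p)) ≤ binCDF z l p / binCDF (z + 1) l p := by
  have hq : 0 < 1 - p := sub_pos.mpr hp1
  have hsplit : binCDF z l p = ∑ j ∈ range l, binTerm z j p + binTerm z l p :=
    sum_range_succ _ _
  rw [div_le_div_iff₀ (by positivity) (binCDF_pos hp0 hp1 _ _), binCDF_succ_left]
  linear_combination mul_sum_range_binTerm_le hp0 hp1.le z l + p * ((z : ℝ) - l + 1) * hsplit

theorem stmt_5 (lam : ℝ) (hlam0 : 0 < lam) (hlam1 : lam < 1) (l : ℕ) :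
    (∀ z₁ z₂ : ℕ, l ≤ z₁ → z₁ ≤ z₂ →
      binCDF z₁ l (1 - lam) / binCDF (z₁ + 1) l (1 - lam)
        ≤ binCDF z₂ l (1 - lam) / binCDF (z₂ + 1) l (1 - lam)) ∧
    (∀ z : ℕ, l ≤ z →
      ((z : ℝ) - l + 1) / (((z : ℝ) + 1) * lam)
          ≤ binCDF z l (1 - lam) / binCDF (z + 1) l (1 - lam) ∧
        binCDF z l (1 - lam) / binCDF (z + 1) l (1 - lam) ≤ 1 / lam) := by
  have hp0 : 0 ≤ 1 - lam := by linarith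
  have hp1 : 1 - lam < 1 := by linarith
  have hq : 1 - (1 - lam) = lam := sub_sub_cancel 1 lam
  refine ⟨fun z₁ z₂ _ hz ↦ monotone_binCDF_div_binCDF_succ hp0 hp1 l hz,
    fun z _ ↦ ⟨?_, ?_⟩⟩
  · simpa only [hq] using le_binCDF_div_binCDF_succ hp0 hp1 z l
  · simpa only [hq] using binCDF_div_binCDF_succ_le hp0 hp1 z l
end

section
/- For 0 < λ < 1, ν = 1-λ, and integers 0 ≤ l ≤ ν z, we have B_{z,l}(ν)/B_{z+1,l}(ν) ≤ (z-l+1+√(λl))/((z+1)λ). -/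
open Finset

noncomputable def binPMF (n : ℕ) (p : ℝ) (j : ℕ) : ℝ :=
  n.choose j * p ^ j * (1 - p) ^ (n - j)

theorem binCDF_eq_sum_binPMF (n l : ℕ) (p : ℝ) :
    binCDF n l p = ∑ j ∈ range (l + 1), binPMF n p j :=
  rfl

theorem binPMF_nonneg {n : ℕ} {p : ℝ} (hp0 : 0 ≤ p) (hp1 : p ≤ 1) (j : ℕ) :
    0 ≤ binPMF n p j := by
  have : 0 ≤ 1 - p := by linarith
  unfold binPMF
  positivity

theorem binPMF_zero (n : ℕ) (p : ℝ) : binPMF n p 0 = (1 - p) ^ n := by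
  simp [binPMF]

theorem succ_mul_binPMF_succ (n : ℕ) (p : ℝ) (k : ℕ) :
    ((k : ℝ) + 1) * (1 - p) * binPMF n p (k + 1) = ((n : ℝ) - k) * p * binPMF n p k := by
  unfold binPMF
  rcases lt_or_ge k n with hkn | hnk
  · have hchoose : (n.choose (k + 1) : ℝ) * (k + 1) = n.choose k * ((n : ℝ) - k) := by
      have h := congrArg (Nat.cast (R := ℝ)) (Nat.choose_succ_right_eq n k)
      push_cast [Nat.cast_sub hkn.le] at h
      exact h
    have hpow : (1 - p) ^ (n - k) = (1 - p) * (1 - p) ^ (n - (k + 1)) := by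
      rw [← pow_succ']; congr 1; omega
    rw [hpow, pow_succ]
    linear_combination p ^ k * p * (1 - p) * (1 - p) ^ (n - (k + 1)) * hchoose
  · rw [Nat.choose_eq_zero_of_lt (by omega : n < k + 1)]
    rcases hnk.eq_or_lt with rfl | hnk
    · simp
    · simp [Nat.choose_eq_zero_of_lt hnk]

theorem sum_range_mean_sub_mul_binPMF (n : ℕ) (p : ℝ) (l : ℕ) :
    ∑ j ∈ range (l + 1), ((n : ℝ) * p - j) * binPMF n p j
      = (1 - p) * ((l : ℝ) + 1) * binPMF n p (l + 1) := by
  induction l with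
  | zero =>
    have h := succ_mul_binPMF_succ n p 0
    simp only [sum_range_one, Nat.cast_zero, zero_add] at h ⊢
    linear_combination -h
  | succ l ih =>
    have h := succ_mul_binPMF_succ n p (l + 1)
    rw [sum_range_succ, ih]
    push_cast at h ⊢
    linear_combination -h

theorem sum_range_moment_identity (n : ℕ) (p : ℝ) (l : ℕ) :
    ∑ j ∈ range (l + 1),
        (((l : ℝ) - j) ^ 2 + ((n : ℝ) * p - l + (1 - p)) * ((l : ℝ) - j) - (1 - p) * l)
          * binPMF n p j = 0 := by
  induction l with
  | zero => simp
  | succ l ih =>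
    have hstep : ∀ j ∈ range (l + 1),
        ((((l + 1 : ℕ) : ℝ) - j) ^ 2 + ((n : ℝ) * p - ((l + 1 : ℕ) : ℝ) + (1 - p))
            * (((l + 1 : ℕ) : ℝ) - j) - (1 - p) * ((l + 1 : ℕ) : ℝ)) * binPMF n p j
          = (((l : ℝ) - j) ^ 2 + ((n : ℝ) * p - l + (1 - p)) * ((l : ℝ) - j) - (1 - p) * l)
              * binPMF n p j + ((n : ℝ) * p - j) * binPMF n p j := by
      intro j _
      push_cast
      ring
    rw [sum_range_succ, sum_congr rfl hstep, sum_add_distrib, ih,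
      sum_range_mean_sub_mul_binPMF]
    push_cast
    ring

theorem succ_mul_binPMF_eq_binPMF_succ (n : ℕ) (p : ℝ) (j : ℕ) :
    ((n : ℝ) + 1) * (1 - p) * binPMF n p j = ((n : ℝ) + 1 - j) * binPMF (n + 1) p j := by
  unfold binPMF
  rcases le_or_gt j n with hjn | hnj
  · have hchoose : (n.choose j : ℝ) * (n + 1) = (n + 1).choose j * ((n : ℝ) + 1 - j) := by
      have h := congrArg (Nat.cast (R := ℝ)) (Nat.choose_mul_succ_eq n j)
      push_cast [Nat.cast_sub (by omega : j ≤ n + 1)] at h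
      exact h
    have hpow : (1 - p) ^ (n + 1 - j) = (1 - p) * (1 - p) ^ (n - j) := by
      rw [← pow_succ']; congr 1; omega
    rw [hpow]
    linear_combination p ^ j * (1 - p) * (1 - p) ^ (n - j) * hchoose
  · rw [Nat.choose_eq_zero_of_lt hnj]
    rcases (Nat.succ_le_of_lt hnj).eq_or_lt with rfl | hnj
    · simp
    · simp [Nat.choose_eq_zero_of_lt hnj]

section TruncatedMoments

variable {n : ℕ} {p : ℝ}

theorem sum_range_sq_sub_mul_binPMF_le (hp0 : 0 ≤ p) (hp1 : p ≤ 1) {l : ℕ}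
    (hl : (l : ℝ) ≤ n * p + (1 - p)) :
    ∑ j ∈ range (l + 1), ((l : ℝ) - j) ^ 2 * binPMF n p j
      ≤ (1 - p) * l * ∑ j ∈ range (l + 1), binPMF n p j := by
  have hT : 0 ≤ ∑ j ∈ range (l + 1), ((l : ℝ) - j) * binPMF n p j := by
    refine sum_nonneg fun j hj => mul_nonneg ?_ (binPMF_nonneg hp0 hp1 j)
    exact sub_nonneg.mpr (by exact_mod_cast Nat.lt_succ_iff.mp (mem_range.mp hj))
  have hid : ∑ j ∈ range (l + 1), ((l : ℝ) - j) ^ 2 * binPMF n p j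
      + ((n : ℝ) * p - l + (1 - p)) * ∑ j ∈ range (l + 1), ((l : ℝ) - j) * binPMF n p j
      - (1 - p) * l * ∑ j ∈ range (l + 1), binPMF n p j = 0 := by
    rw [← sum_range_moment_identity n p l, mul_sum, mul_sum, ← sum_add_distrib,
      ← sum_sub_distrib]
    exact sum_congr rfl fun j _ => by ring
  nlinarith [mul_nonneg (sub_nonneg.mpr hl) hT]

theorem sum_range_sub_mul_binPMF_le (hp0 : 0 ≤ p) (hp1 : p ≤ 1) {l : ℕ}
    (hl : (l : ℝ) ≤ n * p + (1 - p)) :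
    ∑ j ∈ range (l + 1), ((l : ℝ) - j) * binPMF n p j
      ≤ √((1 - p) * l) * ∑ j ∈ range (l + 1), binPMF n p j := by
  set S := ∑ j ∈ range (l + 1), binPMF n p j
  have hb : ∀ j ∈ range (l + 1), 0 ≤ binPMF n p j := fun j _ => binPMF_nonneg hp0 hp1 j
  have hS : 0 ≤ S := sum_nonneg hb
  have hCS : (∑ j ∈ range (l + 1), ((l : ℝ) - j) * binPMF n p j) ^ 2
      ≤ (∑ j ∈ range (l + 1), ((l : ℝ) - j) ^ 2 * binPMF n p j) * S :=
    sum_sq_le_sum_mul_sum_of_sq_le_mul _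
      (fun j hj => mul_nonneg (sq_nonneg _) (hb j hj)) hb (fun j _ => le_of_eq (by ring))
  have hQ := sum_range_sq_sub_mul_binPMF_le hp0 hp1 hl
  rw [← Real.sqrt_sq hS, ← Real.sqrt_mul' _ (sq_nonneg S)]
  refine (le_abs_self _).trans (Real.abs_le_sqrt ?_)
  nlinarith [mul_le_mul_of_nonneg_right hQ hS]

end TruncatedMoments

theorem stmt_6 (lam : ℝ) (hlam0 : 0 < lam) (hlam1 : lam < 1) (z l : ℕ)
    (hl : (l : ℝ) ≤ (1 - lam) * z) :
    binCDF z l (1 - lam) / binCDF (z + 1) l (1 - lam)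
      ≤ ((z : ℝ) - l + 1 + Real.sqrt (lam * l)) / (((z : ℝ) + 1) * lam) := by
  have hq : 1 - (1 - lam) = lam := by ring
  have hp0 : 0 ≤ 1 - lam := by linarith
  have hp1 : 1 - lam ≤ 1 := by linarith
  have hdeficit := sum_range_sub_mul_binPMF_le (n := z + 1) hp0 hp1 (l := l)
    (by push_cast; linarith)
  rw [hq, ← binCDF_eq_sum_binPMF] at hdeficit
  have hnum : binCDF z l (1 - lam) * (((z : ℝ) + 1) * lam)
      = ((z : ℝ) + 1 - l) * binCDF (z + 1) l (1 - lam)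
        + ∑ j ∈ range (l + 1), ((l : ℝ) - j) * binPMF (z + 1) (1 - lam) j := by
    rw [binCDF_eq_sum_binPMF, binCDF_eq_sum_binPMF, sum_mul, mul_sum, ← sum_add_distrib]
    refine sum_congr rfl fun j _ => ?_
    have h := succ_mul_binPMF_eq_binPMF_succ z (1 - lam) j
    rw [hq] at h
    linear_combination h
  have hden : 0 < binCDF (z + 1) l (1 - lam) := by
    rw [binCDF_eq_sum_binPMF]
    refine sum_pos' (fun j _ => binPMF_nonneg hp0 hp1 j) ⟨0, by simp, ?_⟩
    rw [binPMF_zero, hq]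
    positivity
  rw [div_le_div_iff₀ hden (by positivity), hnum]
  linarith
end

section
/- For integers z ≥ 0 and 0 ≤ p ≤ 1, the binomial CDF at the rounded-up mean satisfies B_{z,⌈zp⌉}(p) ≥ 1/2. -/
open Finset Set

lemma binCDF_self (n : ℕ) (p : ℝ) : binCDF n n p = 1 := by
  have h := add_pow p (1 - p) n
  rw [add_sub_cancel, one_pow] at h
  exact (sum_congr rfl fun j _ ↦ by ring).trans h.symm

lemma binCDF_eq_one_of_le {n k : ℕ} (h : n ≤ k) (p : ℝ) : binCDF n k p = 1 := by
  rw [← binCDF_self n p, binCDF, binCDF]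
  refine (sum_subset (range_subset_range.2 (by omega)) fun j hj hjn ↦ ?_).symm
  rw [Nat.choose_eq_zero_of_lt (by simpa using hjn), Nat.cast_zero, zero_mul, zero_mul]

lemma binCDF_at_zero (n k : ℕ) : binCDF n k 0 = 1 := by
  rw [binCDF, sum_eq_single_of_mem 0 (by simp) fun j _ hj ↦ by simp [hj]]
  simp

lemma binCDF_nonneg (n k : ℕ) {p : ℝ} (hp0 : 0 ≤ p) (hp1 : p ≤ 1) : 0 ≤ binCDF n k p := by
  have : 0 ≤ 1 - p := by linarith
  exact sum_nonneg fun _ _ ↦ by positivity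

lemma hasDerivAt_binCDF_succ {n k : ℕ} (hk : k ≤ n) (p : ℝ) :
    HasDerivAt (binCDF (n + 1) k) (-((n + 1) * n.choose k * p ^ k * (1 - p) ^ (n - k))) p := by
  have hq : HasDerivAt (fun p : ℝ ↦ 1 - p) (-1) p := (hasDerivAt_id p).const_sub 1
  induction k with
  | zero =>
    have h : binCDF (n + 1) 0 = fun p ↦ (1 - p) ^ (n + 1) := by ext p; simp [binCDF]
    rw [h]
    refine (hq.fun_pow (n + 1)).congr_deriv ?_
    simp
  | succ k ih =>
    obtain ⟨m, rfl⟩ := Nat.exists_eq_add_of_le hk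
    have hsplit : binCDF (k + 1 + m + 1) (k + 1) = fun p ↦ binCDF (k + 1 + m + 1) k p
        + ((k + 1 + m + 1).choose (k + 1) : ℝ) * p ^ (k + 1) * (1 - p) ^ (m + 1) := by
      ext p
      rw [binCDF, sum_range_succ, ← binCDF]
      congr 3
      omega
    have e1 := congrArg (Nat.cast : ℕ → ℝ) (Nat.add_one_mul_choose_eq (k + 1 + m) k)
    have e2 := congrArg (Nat.cast : ℕ → ℝ) (Nat.choose_mul_succ_eq (k + 1 + m) (k + 1))
    rw [show k + 1 + m + 1 - (k + 1) = m + 1 by omega] at e2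
    have ih' := ih (by omega)
    rw [show k + 1 + m - k = m + 1 by omega] at ih'
    rw [hsplit, show k + 1 + m - (k + 1) = m by omega]
    refine (ih'.fun_add (((hasDerivAt_pow (k + 1) p).const_mul _).fun_mul
      (hq.fun_pow (m + 1)))).congr_deriv ?_
    push_cast at e1 e2 ⊢
    linear_combination (p ^ (k + 1) * (1 - p) ^ m) * e2 - (p ^ k * (1 - p) ^ (m + 1)) * e1

lemma antitoneOn_binCDF_succ {n k : ℕ} (hk : k ≤ n) :
    AntitoneOn (binCDF (n + 1) k) (Icc 0 1) := by
  refine antitoneOn_of_hasDerivWithinAt_nonpos (convex_Icc 0 1)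
    (fun p _ ↦ (hasDerivAt_binCDF_succ hk p).continuousAt.continuousWithinAt)
    (fun p _ ↦ (hasDerivAt_binCDF_succ hk p).hasDerivWithinAt) fun p hp ↦ ?_
  rw [interior_Icc] at hp
  have : 0 ≤ 1 - p := by linarith [hp.2]
  have : 0 ≤ p := hp.1.le
  rw [neg_nonpos]
  positivity

lemma mul_mul_sq_sub_sq_le {k m a b x : ℝ} (hk : 0 ≤ k) (hx : 0 ≤ x) (hxa : x < a)
    (hab : a ≤ b) (h : m * a ≤ k * b) :
    m * b * (a ^ 2 - x ^ 2) ≤ k * a * (b ^ 2 - x ^ 2) := by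
  have ha : 0 < a := by linarith
  have hax : 0 ≤ a ^ 2 - x ^ 2 := by nlinarith
  refine le_of_mul_le_mul_left ?_ ha
  nlinarith [mul_le_mul_of_nonneg_right h (mul_nonneg (ha.le.trans hab) hax),
    mul_nonneg hk (mul_nonneg (sq_nonneg x) (show 0 ≤ b ^ 2 - a ^ 2 by nlinarith))]

lemma sub_pow_mul_add_pow_le_add_pow_mul_sub_pow {k m : ℕ} {a b s : ℝ} (hs : 0 ≤ s)
    (hsa : s < a) (hab : a ≤ b) (h : m * a ≤ k * b) :
    (a - s) ^ k * (b + s) ^ m ≤ (a + s) ^ k * (b - s) ^ m := by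
  set g : ℝ → ℝ := fun x ↦
    k * Real.log (a + x) + m * Real.log (b - x) - (k * Real.log (a - x) + m * Real.log (b + x))
  set g' : ℝ → ℝ := fun x ↦ 2 * k * a / (a ^ 2 - x ^ 2) - 2 * m * b / (b ^ 2 - x ^ 2)
  have hg : ∀ x ∈ Icc 0 s, HasDerivAt g (g' x) x := by
    rintro x ⟨hx0, hxs⟩
    have : a + x ≠ 0 := by linarith
    have : b - x ≠ 0 := by linarith
    have : a - x ≠ 0 := by linarith
    have : b + x ≠ 0 := by linarith
    have h1 := ((hasDerivAt_id x).const_add a).log ‹a + x ≠ 0›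
    have h2 := ((hasDerivAt_id x).const_sub b).log ‹b - x ≠ 0›
    have h3 := ((hasDerivAt_id x).const_sub a).log ‹a - x ≠ 0›
    have h4 := ((hasDerivAt_id x).const_add b).log ‹b + x ≠ 0›
    refine (((h1.const_mul (k : ℝ)).add (h2.const_mul (m : ℝ))).sub
      ((h3.const_mul (k : ℝ)).add (h4.const_mul (m : ℝ)))).congr_deriv ?_
    simp only [g', id_eq, sq_sub_sq]
    field_simp
    ring
  have hg'_nonneg : ∀ x ∈ Ioo 0 s, 0 ≤ g' x := by
    rintro x ⟨hx0, hxs⟩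
    have ha : 0 < a ^ 2 - x ^ 2 := by nlinarith
    have hb : 0 < b ^ 2 - x ^ 2 := by nlinarith
    simp only [g', sub_nonneg]
    rw [div_le_div_iff₀ hb ha]
    nlinarith [mul_mul_sq_sub_sq_le k.cast_nonneg hx0.le (hxs.trans hsa) hab h]
  have hmono : MonotoneOn g (Icc 0 s) := monotoneOn_of_hasDerivWithinAt_nonneg (convex_Icc 0 s)
    (fun x hx ↦ (hg x hx).continuousAt.continuousWithinAt)
    (fun x hx ↦ (hg x (interior_subset hx)).hasDerivWithinAt)
    (fun x hx ↦ hg'_nonneg x (by rwa [interior_Icc] at hx))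
  have hgs : g 0 ≤ g s := hmono ⟨le_rfl, hs⟩ ⟨hs, le_rfl⟩ hs
  have h1 : 0 < (a - s) ^ k := pow_pos (by linarith) k
  have h2 : 0 < (b + s) ^ m := pow_pos (by linarith) m
  have h3 : 0 < (a + s) ^ k := pow_pos (by linarith) k
  have h4 : 0 < (b - s) ^ m := pow_pos (by linarith) m
  rw [← Real.log_le_log_iff (mul_pos h1 h2) (mul_pos h3 h4), Real.log_mul h1.ne' h2.ne',
    Real.log_mul h3.ne' h4.ne', Real.log_pow, Real.log_pow, Real.log_pow, Real.log_pow]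
  simp only [g, add_zero, sub_zero, sub_self] at hgs
  linarith

lemma one_half_le_binCDF_of_two_mul_le {n k : ℕ} (hk : 2 * k ≤ n + 1) :
    1 / 2 ≤ binCDF (n + 1) k (k / (n + 1)) := by
  have hkn : k ≤ n := by omega
  set a : ℝ := k / (n + 1)
  have hn : (0 : ℝ) < n + 1 := by positivity
  have ha0 : 0 ≤ a := by positivity
  have h2a : 2 * a ≤ 1 := by
    rw [← mul_div_assoc, div_le_one hn]
    exact_mod_cast hk
  set F : ℝ → ℝ := fun t ↦ (n + 1) * n.choose k * t ^ k * (1 - t) ^ (n - k)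
  have hF : ∀ s ∈ Ioo 0 a, F (a - s) ≤ F (a + s) := by
    rintro s ⟨hs0, hsa⟩
    have hma : ((n - k : ℕ) : ℝ) * a ≤ k * (1 - a) := by
      rw [Nat.cast_sub hkn, mul_one_sub, ← sub_nonneg]
      have : (n - k) * a - (k - k * a) = -a := by
        simp only [a]
        field_simp
        ring
      linarith
    have := sub_pow_mul_add_pow_le_add_pow_mul_sub_pow hs0.le hsa (by linarith) hma
    simp only [F, show 1 - (a - s) = 1 - a + s by ring, show 1 - (a + s) = 1 - a - s by ring,
      mul_assoc]
    exact mul_le_mul_of_nonneg_left (mul_le_mul_of_nonneg_left this (by positivity)) hn.le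
  set φ : ℝ → ℝ := fun s ↦ binCDF (n + 1) k (a - s) + binCDF (n + 1) k (a + s)
  have hφ : ∀ s, HasDerivAt φ (F (a - s) - F (a + s)) s := fun s ↦ by
    have h1 := (hasDerivAt_binCDF_succ hkn (a - s)).comp s ((hasDerivAt_id s).const_sub a)
    have h2 := (hasDerivAt_binCDF_succ hkn (a + s)).comp s ((hasDerivAt_id s).const_add a)
    refine (h1.add h2).congr_deriv ?_
    simp only [F]
    ring
  have hanti : AntitoneOn φ (Icc 0 a) := antitoneOn_of_hasDerivWithinAt_nonpos (convex_Icc 0 a)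
    (fun s _ ↦ (hφ s).continuousAt.continuousWithinAt) (fun s _ ↦ (hφ s).hasDerivWithinAt)
    (fun s hs ↦ sub_nonpos.2 (hF s (by rwa [interior_Icc] at hs)))
  have hφa : φ a ≤ φ 0 := hanti ⟨le_rfl, ha0⟩ ⟨ha0, le_rfl⟩ ha0
  simp only [φ, sub_self, sub_zero, add_zero, binCDF_at_zero] at hφa
  linarith [binCDF_nonneg (n + 1) k (by linarith : 0 ≤ a + a) (by linarith : a + a ≤ 1)]

lemma choose_mul_pow_le_choose_mul_pow {n k : ℕ} (hn : n ≤ 2 * k) {i : ℕ} (hi : i < n - k) :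
    n.choose (k + 1 + i) * k ^ (2 * i + 1) ≤ n.choose (k - i) * (n - k) ^ (2 * i + 1) := by
  induction i with
  | zero =>
    calc n.choose (k + 1) * k ^ 1 ≤ n.choose (k + 1) * (k + 1) := by
          rw [pow_one]; exact Nat.mul_le_mul_left _ (by omega)
      _ = n.choose (k - 0) * (n - k) ^ 1 := by rw [Nat.choose_succ_right_eq, pow_one, Nat.sub_zero]
  | succ i ih =>
    have ih := ih (by omega)
    have hup := Nat.choose_succ_right_eq n (k + 1 + i)
    have hlow := Nat.choose_succ_right_eq n (k - (i + 1))
    rw [show k - (i + 1) + 1 = k - i by omega] at hlow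
    have key : (n - (k + 1 + i)) * (n - k + (i + 1)) * k ^ 2
        ≤ (k - i) * (k + 1 + i + 1) * (n - k) ^ 2 := by
      zify [(by omega : k ≤ n), (by omega : k + 1 + i ≤ n), (by omega : i ≤ k)]
      have : ((n : ℤ) - k) ^ 2 ≤ (k : ℤ) ^ 2 := pow_le_pow_left₀ (by omega) (by omega) 2
      nlinarith [mul_le_mul_of_nonneg_left this (sq_nonneg ((i : ℤ) + 1))]
    rw [show n - (k - (i + 1)) = n - k + (i + 1) by omega] at hlow
    rw [show 2 * (i + 1) + 1 = 2 * i + 1 + 2 by omega]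
    refine Nat.le_of_mul_le_mul_right ?_
      (show 0 < (k + 1 + i + 1) * (n - k + (i + 1)) by positivity)
    calc n.choose (k + 1 + i + 1) * k ^ (2 * i + 1 + 2) * ((k + 1 + i + 1) * (n - k + (i + 1)))
        = n.choose (k + 1 + i + 1) * (k + 1 + i + 1) * (n - k + (i + 1))
            * k ^ (2 * i + 1 + 2) := by ring
      _ = n.choose (k + 1 + i) * k ^ (2 * i + 1)
            * ((n - (k + 1 + i)) * (n - k + (i + 1)) * k ^ 2) := by rw [hup]; ring
      _ ≤ n.choose (k - i) * (n - k) ^ (2 * i + 1)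
            * ((k - i) * (k + 1 + i + 1) * (n - k) ^ 2) := Nat.mul_le_mul ih key
      _ = n.choose (k - i) * (k - i) * (k + 1 + i + 1) * (n - k) ^ (2 * i + 1 + 2) := by ring
      _ = n.choose (k - (i + 1)) * (n - k) ^ (2 * i + 1 + 2)
            * ((k + 1 + i + 1) * (n - k + (i + 1))) := by rw [hlow]; ring

lemma choose_mul_pow_mul_pow_le_of_le_two_mul {n k : ℕ} (hn : n ≤ 2 * k) {i : ℕ}
    (hi : i < n - k) :
    (n.choose (k + 1 + i) : ℝ) * (k / n) ^ (k + 1 + i) * (1 - k / n) ^ (n - (k + 1 + i))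
      ≤ n.choose (k - i) * (k / n) ^ (k - i) * (1 - k / n) ^ (n - (k - i)) := by
  have hn0 : (0 : ℝ) < n := by norm_cast; omega
  set p : ℝ := k / n
  have hq : 1 - p = ((n - k : ℕ) : ℝ) / n := by
    rw [Nat.cast_sub (by omega), eq_div_iff hn0.ne', sub_mul, div_mul_cancel₀ _ hn0.ne', one_mul]
  have hq0 : 0 ≤ 1 - p := by rw [hq]; positivity
  have hc : (n.choose (k + 1 + i) : ℝ) * p ^ (2 * i + 1)
      ≤ n.choose (k - i) * (1 - p) ^ (2 * i + 1) := by
    rw [hq, div_pow, div_pow, ← mul_div_assoc, ← mul_div_assoc]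
    exact div_le_div_of_nonneg_right (by exact_mod_cast choose_mul_pow_le_choose_mul_pow hn hi)
      (by positivity)
  have hp : p ^ (k + 1 + i) = p ^ (2 * i + 1) * p ^ (k - i) := by
    rw [← pow_add]; congr 1; omega
  have hq' : (1 - p) ^ (n - (k - i)) = (1 - p) ^ (2 * i + 1) * (1 - p) ^ (n - (k + 1 + i)) := by
    rw [← pow_add]; congr 1; omega
  set r := p ^ (k - i) * (1 - p) ^ (n - (k + 1 + i))
  have hr : 0 ≤ r := mul_nonneg (by positivity) (pow_nonneg hq0 _)
  calc _ = (n.choose (k + 1 + i) * p ^ (2 * i + 1)) * r := by rw [hp]; ring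
    _ ≤ (n.choose (k - i) * (1 - p) ^ (2 * i + 1)) * r := mul_le_mul_of_nonneg_right hc hr
    _ = _ := by rw [hq']; ring

lemma one_half_le_binCDF_of_le_two_mul {n k : ℕ} (hkn : k < n) (hn : n ≤ 2 * k) :
    1 / 2 ≤ binCDF n k (k / n) := by
  set T : ℕ → ℝ := fun j ↦ (n.choose j : ℝ) * (k / n) ^ j * (1 - k / n) ^ (n - j)
  have hT : ∀ j, 0 ≤ T j := fun j ↦ by
    have : (k : ℝ) / n ≤ 1 := div_le_one_of_le₀ (by exact_mod_cast hkn.le) (by positivity)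
    have : 0 ≤ 1 - (k : ℝ) / n := by linarith
    positivity
  have htotal : ∑ j ∈ range (k + 1), T j + ∑ i ∈ range (n - k), T (k + 1 + i) = 1 := by
    rw [← sum_range_add, show k + 1 + (n - k) = n + 1 by omega]
    exact binCDF_self n _
  have htail : ∑ i ∈ range (n - k), T (k + 1 + i) ≤ ∑ j ∈ range (k + 1), T j :=
    calc ∑ i ∈ range (n - k), T (k + 1 + i)
        ≤ ∑ i ∈ range (n - k), T (k - i) :=
          sum_le_sum fun i hi ↦ choose_mul_pow_mul_pow_le_of_le_two_mul hn (mem_range.1 hi)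
      _ ≤ ∑ i ∈ range (k + 1), T (k + 1 - 1 - i) :=
          sum_le_sum_of_subset_of_nonneg (range_subset_range.2 (by omega)) fun _ _ _ ↦ hT _
      _ = ∑ j ∈ range (k + 1), T j := sum_range_reflect T (k + 1)
  have : binCDF n k (k / n) = ∑ j ∈ range (k + 1), T j := rfl
  linarith

lemma one_half_le_binCDF_at_mean {n k : ℕ} (hk : k ≤ n) :
    1 / 2 ≤ binCDF (n + 1) k (k / (n + 1)) := by
  rcases le_or_gt (2 * k) (n + 1) with h | h
  · exact one_half_le_binCDF_of_two_mul_le h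
  · simpa using one_half_le_binCDF_of_le_two_mul (n := n + 1) (by omega) h.le

theorem stmt_9 (z : ℕ) (p : ℝ) (hp0 : 0 ≤ p) (hp1 : p ≤ 1) :
    (1 : ℝ) / 2 ≤ binCDF z ⌈(z : ℝ) * p⌉₊ p := by
  set c := ⌈(z : ℝ) * p⌉₊
  rcases le_or_gt z c with hzc | hcz
  · rw [binCDF_eq_one_of_le hzc]
    norm_num
  obtain ⟨n, rfl⟩ := Nat.exists_eq_add_one_of_ne_zero (by omega : z ≠ 0)
  have hn : (0 : ℝ) < n + 1 := by positivity
  have hpc : p ≤ c / (n + 1) := by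
    rw [le_div_iff₀ hn, mul_comm]
    exact_mod_cast Nat.le_ceil ((n + 1 : ℕ) * p)
  have hc1 : (c : ℝ) / (n + 1) ≤ 1 := by
    rw [div_le_one hn]
    exact_mod_cast hcz.le
  calc (1 : ℝ) / 2 ≤ binCDF (n + 1) c (c / (n + 1)) := one_half_le_binCDF_at_mean (by omega)
    _ ≤ binCDF (n + 1) c p :=
      antitoneOn_binCDF_succ (by omega) ⟨hp0, hp1⟩ ⟨by positivity, hc1⟩ hpc
end

section
/- For 0 < λ < 1, ν = 1-λ, 0 < δ ≤ 1/2, and integer l ≥ 0, define z*(l,δ,λ) = min{z ∈ ℤ, z ≥ l : B_{z,l}(ν) ≤ δ}. Then z*(l,δ,λ) ≥ l/ν. -/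
/-- `z*(l,δ,λ)`: the smallest `z ≥ l` with `B_{z,l}(1-λ) ≤ δ`. -/
noncomputable def zStar (l : ℕ) (δ lam : ℝ) : ℕ :=
  sInf {z : ℕ | l ≤ z ∧ binCDF z l (1 - lam) ≤ δ}

open Finset Filter Topology

noncomputable def binWeight (n : ℕ) (p : ℝ) (i : ℕ) : ℝ :=
  n.choose i * p ^ i * (1 - p) ^ (n - i)

section BinWeight

variable {n i : ℕ} {p : ℝ}

lemma binCDF_eq_sum_binWeight (l : ℕ) :
    binCDF n l p = ∑ i ∈ range (l + 1), binWeight n p i := rfl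

lemma binWeight_nonneg (hp0 : 0 ≤ p) (hp1 : p ≤ 1) : 0 ≤ binWeight n p i := by
  have : 0 ≤ 1 - p := by linarith
  unfold binWeight; positivity

lemma binWeight_pos (hp0 : 0 < p) (hp1 : p < 1) (hi : i ≤ n) : 0 < binWeight n p i := by
  have : 0 < 1 - p := by linarith
  have : 0 < (n.choose i : ℝ) := by exact_mod_cast Nat.choose_pos hi
  unfold binWeight; positivity

lemma binWeight_of_lt (h : n < i) : binWeight n p i = 0 := by
  simp [binWeight, Nat.choose_eq_zero_of_lt h]

lemma binWeight_one_sub (hi : i ≤ n) : binWeight n (1 - p) (n - i) = binWeight n p i := by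
  rw [binWeight, binWeight, Nat.choose_symm hi, Nat.sub_sub_self hi, sub_sub_cancel]
  ring

lemma sum_range_binWeight {N : ℕ} (hN : n < N) : ∑ i ∈ range N, binWeight n p i = 1 := by
  rw [eventually_constant_sum (fun i hi => binWeight_of_lt hi) hN]
  have := (add_pow p (1 - p) n).symm
  simp only [add_sub_cancel, one_pow] at this
  rw [← this]
  exact sum_congr rfl fun i _ => by rw [binWeight]; ring

lemma binWeight_succ (i : ℕ) :
    ((i : ℝ) + 1) * (1 - p) * binWeight n p (i + 1) = ((n : ℝ) - i) * p * binWeight n p i := by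
  rcases lt_or_ge i n with hi | hi
  · have hc : (n.choose (i + 1) : ℝ) * (i + 1) = n.choose i * (n - i : ℕ) := by
      exact_mod_cast Nat.choose_succ_right_eq n i
    have hpow : (1 - p) ^ (n - i) = (1 - p) ^ (n - (i + 1)) * (1 - p) := by
      rw [← pow_succ]; congr 1; omega
    rw [Nat.cast_sub hi.le] at hc
    rw [binWeight, binWeight, hpow]
    linear_combination p ^ (i + 1) * (1 - p) ^ (n - (i + 1)) * (1 - p) * hc
  · rcases hi.eq_or_lt with rfl | hi
    · simp [binWeight_of_lt (Nat.lt_succ_self n)]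
    · simp [binWeight_of_lt hi, binWeight_of_lt (hi.trans (Nat.lt_succ_self i))]

lemma binWeight_succ_succ (n j : ℕ) :
    binWeight (n + 1) p (j + 1) = p * binWeight n p j + (1 - p) * binWeight n p (j + 1) := by
  rcases lt_or_ge j n with hj | hj
  · have hpow : (1 - p) ^ (n - j) = (1 - p) ^ (n - (j + 1)) * (1 - p) := by
      rw [← pow_succ]; congr 1; omega
    simp only [binWeight, Nat.choose_succ_succ, Nat.cast_add, Nat.add_sub_add_right, hpow]
    ring
  · rcases hj.eq_or_lt with rfl | hj
    · rw [binWeight_of_lt (Nat.lt_succ_self n)]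
      simp [binWeight, pow_succ, mul_comm]
    · simp [binWeight_of_lt hj, binWeight_of_lt (Nat.succ_lt_succ hj),
        binWeight_of_lt (hj.trans (Nat.lt_succ_self j))]

end BinWeight

section BinCDF

variable {n l : ℕ} {p : ℝ}

lemma binCDF_of_le (h : n ≤ l) : binCDF n l p = 1 :=
  sum_range_binWeight (Nat.lt_succ_of_le h)

lemma binCDF_succ_succ (n l : ℕ) (p : ℝ) :
    binCDF (n + 1) (l + 1) p = p * binCDF n l p + (1 - p) * binCDF n (l + 1) p := by
  have h0 : binWeight (n + 1) p 0 = (1 - p) * binWeight n p 0 := by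
    simp only [binWeight, Nat.choose_zero_right, Nat.cast_one, pow_zero, mul_one, tsub_zero,
      pow_succ, one_mul]
    ring
  simp only [binCDF_eq_sum_binWeight, sum_range_succ' _ (l + 1), binWeight_succ_succ,
    sum_add_distrib, h0, mul_add, mul_sum]
  ring

lemma binCDF_le_binCDF_succ (hp0 : 0 ≤ p) (hp1 : p ≤ 1) :
    binCDF n l p ≤ binCDF n (l + 1) p := by
  rw [binCDF_eq_sum_binWeight, binCDF_eq_sum_binWeight, sum_range_succ _ (l + 1)]
  linarith [binWeight_nonneg (n := n) (i := l + 1) hp0 hp1]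

lemma antitoneOn_binCDF (n l : ℕ) : AntitoneOn (binCDF n l) (Set.Icc 0 1) := by
  induction n generalizing l with
  | zero => intro p _ p' _ _; simp [binCDF_of_le (Nat.zero_le l)]
  | succ n ih =>
    rintro p ⟨hp0, hp1⟩ p' ⟨hp'0, hp'1⟩ hpp'
    cases l with
    | zero =>
      simp only [binCDF, zero_add, range_one, sum_singleton, Nat.choose_zero_right,
        Nat.cast_one, pow_zero, one_mul, Nat.sub_zero]
      exact pow_le_pow_left₀ (by linarith) (by linarith) _
    | succ l =>
      rw [binCDF_succ_succ, binCDF_succ_succ]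
      have hl := ih l ⟨hp0, hp1⟩ ⟨hp'0, hp'1⟩ hpp'
      have hl' := ih (l + 1) ⟨hp0, hp1⟩ ⟨hp'0, hp'1⟩ hpp'
      have hmono := binCDF_le_binCDF_succ (n := n) (l := l) hp'0 hp'1
      -- raising `p` moves weight from the larger `binCDF n (l + 1)` to the smaller `binCDF n l`
      nlinarith [mul_le_mul_of_nonneg_left hmono (sub_nonneg.2 hpp')]

lemma binCDF_le_pow (hp0 : 0 ≤ p) (hp1 : p ≤ 1) (hl : l ≤ n) :
    binCDF n l p ≤ (l + 1) * n ^ l * (1 - p) ^ (n - l) := by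
  have hterm : ∀ j ∈ range (l + 1), binWeight n p j ≤ n ^ l * (1 - p) ^ (n - l) := by
    intro j hj
    have hjl : j ≤ l := Nat.lt_succ_iff.1 (mem_range.1 hj)
    have hchoose : (n.choose j : ℝ) ≤ n ^ l := by
      rcases Nat.eq_zero_or_pos l with rfl | hl0
      · simp [Nat.le_zero.1 hjl]
      calc (n.choose j : ℝ) ≤ n ^ j := by exact_mod_cast Nat.choose_le_pow n j
        _ ≤ n ^ l := pow_le_pow_right₀ (by exact_mod_cast hl0.trans_le hl) hjl
    have hq : (1 - p) ^ (n - j) ≤ (1 - p) ^ (n - l) :=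
      pow_le_pow_of_le_one (by linarith) (by linarith) (by omega)
    calc binWeight n p j = n.choose j * p ^ j * (1 - p) ^ (n - j) := rfl
      _ ≤ n ^ l * 1 * (1 - p) ^ (n - l) := by
        have : 0 ≤ 1 - p := by linarith
        gcongr
        exact pow_le_one₀ hp0 hp1
      _ = _ := by ring
  calc binCDF n l p ≤ ∑ j ∈ range (l + 1), (n : ℝ) ^ l * (1 - p) ^ (n - l) := sum_le_sum hterm
    _ = _ := by simp only [sum_const, card_range, nsmul_eq_mul, Nat.cast_add, Nat.cast_one]; ring

lemma tendsto_binCDF_atTop_zero (l : ℕ) (hp0 : 0 < p) (hp1 : p < 1) :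
    Tendsto (fun n => binCDF n l p) atTop (𝓝 0) := by
  have hq : 0 < 1 - p := by linarith
  have hlim : Tendsto (fun n : ℕ => (l + 1) / (1 - p) ^ l * ((n : ℝ) ^ l * (1 - p) ^ n))
      atTop (𝓝 0) := by
    simpa using (tendsto_pow_const_mul_const_pow_of_abs_lt_one l
      (abs_lt.2 ⟨by linarith, by linarith⟩ : |1 - p| < 1)).const_mul ((l + 1) / (1 - p) ^ l)
  refine squeeze_zero' (Eventually.of_forall fun n => ?_) ?_ hlim
  · exact sum_nonneg fun i _ => binWeight_nonneg hp0.le hp1.le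
  · filter_upwards [eventually_ge_atTop l] with n hn
    calc binCDF n l p ≤ (l + 1) * n ^ l * (1 - p) ^ (n - l) := binCDF_le_pow hp0.le hp1.le hn
      _ = (l + 1) / (1 - p) ^ l * ((n : ℝ) ^ l * (1 - p) ^ n) := by
        rw [← pow_sub_mul_pow (1 - p) hn]
        field_simp

end BinCDF

lemma le_of_mul_eq_mul_of_le {a b a' b' α β : ℝ} (h : a' * b * α = a * b' * β)
    (ha : 0 ≤ a) (hb : 0 < b) (hb' : 0 ≤ b') (hα : 0 < α) (hab : a ≤ b) (hβα : β ≤ α) :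
    a' ≤ b' := by
  have : a' * (b * α) ≤ b' * (b * α) := by
    calc a' * (b * α) = a * b' * β := by rw [← h]; ring
      _ ≤ a * b' * α := by gcongr
      _ ≤ b * b' * α := by gcongr
      _ = b' * (b * α) := by ring
  exact le_of_mul_le_mul_right this (by positivity)

lemma sum_nonneg_of_sign_change {d : ℕ → ℝ} {N : ℕ} (h0 : 0 ≤ d 0)
    (hd : ∀ i j, i ≤ j → d i < 0 → d j ≤ 0) (hmom : ∑ k ∈ range N, (k : ℝ) * d k = 0) :
    0 ≤ ∑ k ∈ range N, d k := by
  by_cases hneg : ∃ t, d t < 0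
  · classical
    set t := Nat.find hneg
    have ht : d t < 0 := Nat.find_spec hneg
    have ht0 : 0 < t := Nat.pos_of_ne_zero fun h => (h ▸ ht).not_ge h0
    have hterm : ∀ k ∈ range N, 0 ≤ ((t : ℝ) - k) * d k := by
      intro k _
      rcases lt_or_ge k t with hk | hk
      · exact mul_nonneg (by simpa using hk.le) (not_lt.1 (Nat.find_min hneg hk))
      · exact mul_nonneg_of_nonpos_of_nonpos (by simpa using hk) (hd t k hk ht)
    have hsum : ∑ k ∈ range N, ((t : ℝ) - k) * d k = t * ∑ k ∈ range N, d k := by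
      simp only [sub_mul, sum_sub_distrib, hmom, mul_sum, sub_zero]
    have := sum_nonneg hterm
    rw [hsum] at this
    exact nonneg_of_mul_nonneg_right this (by exact_mod_cast ht0)
  · simp only [not_exists, not_lt] at hneg
    exact sum_nonneg fun k _ => hneg k

/- For `X ∼ Bin(n, p)`, `binWeight n p (m + k)` is `P(X = m + k)` and
`binWeight n (1 - p) (n - m + k)` is `P(X = m - k)`, written through `n - X ∼ Bin(n, 1 - p)`
so that it vanishes for `k > m` instead of being read at the truncated index `m - k = 0`. -/

section Median

variable {n m : ℕ} {p : ℝ}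

lemma pos_of_mul_eq (hm : 0 < m) (hp : n * p = m) : 0 < p :=
  pos_of_mul_pos_right (hp ▸ (Nat.cast_pos.2 hm : (0 : ℝ) < m)) (Nat.cast_nonneg n)

lemma sum_mul_binWeight_add (hp : n * p = m) :
    ∑ k ∈ range (n + 1), (k : ℝ) * binWeight n p (m + k) = m * (1 - p) * binWeight n p m := by
  set τ : ℕ → ℝ := fun k => (m + k) * (1 - p) * binWeight n p (m + k)
  have hstep : ∀ k, τ (k + 1) - τ k = -(k * binWeight n p (m + k)) := by
    intro k
    have := binWeight_succ (n := n) (p := p) (m + k)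
    simp only [τ]
    push_cast at this ⊢
    linear_combination this + binWeight n p (m + k) * hp
  have htel := sum_range_sub τ (n + 1)
  simp only [hstep, sum_neg_distrib, τ, binWeight_of_lt (by omega : n < m + (n + 1))] at htel
  simpa using htel

lemma sum_mul_binWeight_add_eq (hmn : m ≤ n) (hp : n * p = m) :
    ∑ k ∈ range (n + 1), (k : ℝ) * binWeight n p (m + k) =
      ∑ k ∈ range (n + 1), (k : ℝ) * binWeight n (1 - p) (n - m + k) := by
  have hq : (n : ℝ) * (1 - p) = (n - m : ℕ) := by rw [Nat.cast_sub hmn]; linarith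
  rw [sum_mul_binWeight_add hp, sum_mul_binWeight_add hq, binWeight_one_sub hmn,
    Nat.cast_sub hmn]
  linear_combination -binWeight n p m * hp

lemma binWeight_add_succ (k : ℕ) :
    ((m : ℝ) + k + 1) * (1 - p) * binWeight n p (m + k + 1) =
      ((n : ℝ) - m - k) * p * binWeight n p (m + k) := by
  have := binWeight_succ (n := n) (p := p) (m + k)
  push_cast at this
  linear_combination this

lemma binWeight_one_sub_add_succ (hmn : m ≤ n) (k : ℕ) :
    ((n : ℝ) - m + k + 1) * p * binWeight n (1 - p) (n - m + k + 1) =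
      ((m : ℝ) - k) * (1 - p) * binWeight n (1 - p) (n - m + k) := by
  have := binWeight_add_succ (n := n) (m := n - m) (p := 1 - p) k
  rw [Nat.cast_sub hmn, sub_sub_cancel] at this
  linear_combination this

lemma binWeight_cross (hmn : m ≤ n) (k : ℕ) :
    binWeight n p (m + k + 1) * binWeight n (1 - p) (n - m + k) *
        (((m : ℝ) + k + 1) * (m - k) * (1 - p) ^ 2) =
      binWeight n p (m + k) * binWeight n (1 - p) (n - m + k + 1) *
        (((n : ℝ) - m - k) * (n - m + k + 1) * p ^ 2) := by
  linear_combination ((m : ℝ) - k) * (1 - p) * binWeight n (1 - p) (n - m + k) *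
      binWeight_add_succ (n := n) (m := m) (p := p) k -
    ((n : ℝ) - m - k) * p * binWeight n p (m + k) * binWeight_one_sub_add_succ (p := p) hmn k

lemma cross_coeff_sub (hp : n * p = m) (k : ℕ) :
    ((n : ℝ) - m - k) * (n - m + k + 1) * p ^ 2 - ((m : ℝ) + k + 1) * (m - k) * (1 - p) ^ 2 =
      (1 - 2 * p) * (k * (k + 1) - m * (1 - p)) := by
  linear_combination (((n : ℝ) - m) * p + m * (1 - p) + p) * hp

lemma binWeight_add_le_of_mul_le (hmn : m ≤ n) (hm : 0 < m) (hp : n * p = m) (hp2 : p ≤ 1 / 2)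
    (k : ℕ) (hk : (k : ℝ) * (k - 1) ≤ m * (1 - p)) :
    binWeight n p (m + k) ≤ binWeight n (1 - p) (n - m + k) := by
  have hp0 := pos_of_mul_eq hm hp
  induction k with
  | zero => simp [binWeight_one_sub hmn]
  | succ k ih =>
    push_cast at hk
    have hkm : k < m := by
      by_contra h
      have : (m : ℝ) ≤ k := by exact_mod_cast not_lt.1 h
      nlinarith [(Nat.cast_pos.2 hm : (0 : ℝ) < m)]
    have hkm' : (k : ℝ) + 1 ≤ m := by exact_mod_cast hkm
    have hα : 0 < ((m : ℝ) + k + 1) * (m - k) * (1 - p) ^ 2 :=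
      mul_pos (mul_pos (by linarith) (by linarith)) (pow_pos (by linarith) 2)
    have hsign : 0 ≤ (1 - 2 * p) * (m * (1 - p) - k * (k + 1)) :=
      mul_nonneg (by linarith) (by linarith)
    refine le_of_mul_eq_mul_of_le (binWeight_cross hmn k) (binWeight_nonneg hp0.le (by linarith))
      (binWeight_pos (by linarith) (by linarith) (by omega))
      (binWeight_nonneg (by linarith) (by linarith)) hα (ih (by nlinarith))
      (by linarith [cross_coeff_sub hp k])

lemma binWeight_one_sub_add_succ_le_of_le (hmn : m ≤ n) (hm : 0 < m) (hp : n * p = m)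
    (hp2 : p ≤ 1 / 2) {k : ℕ} (hk : m * (1 - p) ≤ (k : ℝ) * (k + 1))
    (h : binWeight n (1 - p) (n - m + k) ≤ binWeight n p (m + k)) :
    binWeight n (1 - p) (n - m + k + 1) ≤ binWeight n p (m + k + 1) := by
  have hp0 := pos_of_mul_eq hm hp
  rcases le_or_gt m k with hmk | hkm
  · rw [binWeight_of_lt (by omega)]
    exact binWeight_nonneg hp0.le (by linarith)
  have h2m : 2 * m ≤ n := by
    have : (2 * m : ℝ) ≤ n := by nlinarith
    exact_mod_cast this
  have hkm' : (k : ℝ) + 1 ≤ m := by exact_mod_cast hkm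
  have hn2m : (2 * m : ℝ) ≤ n := by exact_mod_cast h2m
  have hβ : 0 < ((n : ℝ) - m - k) * (n - m + k + 1) * p ^ 2 :=
    mul_pos (mul_pos (by linarith) (by linarith)) (pow_pos hp0 2)
  have hsign : 0 ≤ (1 - 2 * p) * (k * (k + 1) - m * (1 - p)) :=
    mul_nonneg (by linarith) (by linarith)
  refine le_of_mul_eq_mul_of_le (α := ((n : ℝ) - m - k) * (n - m + k + 1) * p ^ 2)
    (β := ((m : ℝ) + k + 1) * (m - k) * (1 - p) ^ 2)
    (by linear_combination (binWeight_cross (p := p) hmn k).symm)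
    (binWeight_nonneg (by linarith) (by linarith)) (binWeight_pos hp0 (by linarith) (by omega))
    (binWeight_nonneg hp0.le (by linarith)) hβ h (by linarith [cross_coeff_sub hp k])

theorem sum_binWeight_add_le (hmn : m ≤ n) (hm : 0 < m) (hp : n * p = m) (hp2 : p ≤ 1 / 2) :
    ∑ k ∈ range (n + 1), binWeight n p (m + k) ≤
      ∑ k ∈ range (n + 1), binWeight n (1 - p) (n - m + k) := by
  have hcross : ∀ i j, i ≤ j → binWeight n (1 - p) (n - m + i) - binWeight n p (m + i) < 0 →
      binWeight n (1 - p) (n - m + j) - binWeight n p (m + j) ≤ 0 := by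
    intro i j hij hi
    have hi' : m * (1 - p) < (i : ℝ) * (i - 1) := by
      by_contra h
      linarith [binWeight_add_le_of_mul_le hmn hm hp hp2 i (not_lt.1 h)]
    induction j, hij using Nat.le_induction with
    | base => exact hi.le
    | succ j hij ih =>
      have hij' : (i : ℝ) ≤ j := by exact_mod_cast hij
      exact sub_nonpos.2 (binWeight_one_sub_add_succ_le_of_le hmn hm hp hp2 (by nlinarith)
        (sub_nonpos.1 ih))
  have hmom : ∑ k ∈ range (n + 1), (k : ℝ) *
      (binWeight n (1 - p) (n - m + k) - binWeight n p (m + k)) = 0 := by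
    simp only [mul_sub, sum_sub_distrib, sum_mul_binWeight_add_eq hmn hp, sub_self]
  have := sum_nonneg_of_sign_change (by simp [binWeight_one_sub hmn]) hcross hmom
  rwa [sum_sub_distrib, sub_nonneg] at this

lemma binWeight_one_sub_add_one_lt (hmn : m ≤ n) (hm : 0 < m) (hp : n * p = m)
    (hp2 : p ≤ 1 / 2) :
    binWeight n (1 - p) (n - m + 1) < binWeight n p m := by
  have hp0 := pos_of_mul_eq hm hp
  have hstep := binWeight_one_sub_add_succ (p := p) hmn 0
  have hw := binWeight_pos hp0 (by linarith) hmn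
  simp only [CharP.cast_eq_zero, add_zero, sub_zero, binWeight_one_sub hmn] at hstep
  have hpos : 0 < ((n : ℝ) - m + 1) * p :=
    mul_pos (by linarith [(Nat.cast_le (α := ℝ)).2 hmn]) hp0
  refine lt_of_mul_lt_mul_left ?_ hpos.le
  nlinarith

lemma binWeight_one_sub_add_succ_le_binWeight_add (hmn : m ≤ n) (hm : 0 < m)
    (hp : n * p = m) (hp2 : p ≤ 1 / 2) (k : ℕ) :
    binWeight n (1 - p) (n - m + k + 1) ≤ binWeight n p (m + k) := by
  have hp0 := pos_of_mul_eq hm hp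
  induction k with
  | zero => exact (binWeight_one_sub_add_one_lt hmn hm hp hp2).le
  | succ k ih =>
    rcases le_or_gt m (k + 1) with hmk | hkm
    · rw [binWeight_of_lt (by omega)]
      exact binWeight_nonneg hp0.le (by linarith)
    have h2m : (2 * m : ℝ) ≤ n := by nlinarith
    have hkm' : (k : ℝ) + 2 ≤ m := by exact_mod_cast hkm
    have hV := binWeight_one_sub_add_succ (p := p) hmn (k + 1)
    have hU := binWeight_add_succ (n := n) (m := m) (p := p) k
    push_cast at hV
    have hα : 0 < ((n : ℝ) - m + k + 2) * (n - m - k) * p ^ 2 :=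
      mul_pos (mul_pos (by linarith) (by linarith)) (pow_pos hp0 2)
    refine le_of_mul_eq_mul_of_le (α := ((n : ℝ) - m + k + 2) * (n - m - k) * p ^ 2)
      (β := ((m : ℝ) - k - 1) * (m + k + 1) * (1 - p) ^ 2) ?_
      (binWeight_nonneg (by linarith) (by linarith)) (binWeight_pos hp0 (by linarith) ?_)
      (binWeight_nonneg hp0.le (by linarith)) hα ih ?_
    · linear_combination ((n : ℝ) - m - k) * p * binWeight n p (m + k) * hV -
        ((m : ℝ) - k - 1) * (1 - p) * binWeight n (1 - p) (n - m + k + 1) * hU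
    · have : 2 * m ≤ n := by exact_mod_cast h2m
      omega
    · have hcoeff : ((n : ℝ) - m + k + 2) * (n - m - k) * p ^ 2 -
          ((m : ℝ) - k - 1) * (m + k + 1) * (1 - p) ^ 2 =
            (2 * (n - m) + 1) * p ^ 2 + (k + 1) ^ 2 * (1 - 2 * p) := by
        linear_combination (((n : ℝ) - m) * p + m * (1 - p)) * hp
      nlinarith [mul_nonneg (sq_nonneg ((k : ℝ) + 1)) (by linarith : (0 : ℝ) ≤ 1 - 2 * p)]

end Median

lemma binCDF_eq_sum_binWeight_one_sub {n m : ℕ} {p : ℝ} (hmn : m ≤ n) :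
    binCDF n m p = ∑ k ∈ range (n + 1), binWeight n (1 - p) (n - m + k) := by
  rw [binCDF_eq_sum_binWeight, ← sum_range_reflect,
    eventually_constant_sum (u := fun k => binWeight n (1 - p) (n - m + k)) (N := m + 1)
      (fun k hk => binWeight_of_lt (by omega)) (by omega)]
  refine sum_congr rfl fun k hk => ?_
  have hk : k ≤ m := Nat.lt_succ_iff.1 (mem_range.1 hk)
  rw [← binWeight_one_sub (by omega : m + 1 - 1 - k ≤ n)]
  congr 1
  omega

lemma sum_binWeight_add_add_binCDF (n m : ℕ) (p : ℝ) :
    ∑ k ∈ range (n + 1), binWeight n p (m + k) + binCDF n m p = 1 + binWeight n p m := by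
  have htotal := sum_range_binWeight (p := p) (by omega : n < m + (n + 1))
  rw [sum_range_add] at htotal
  rw [binCDF_eq_sum_binWeight, sum_range_succ (binWeight n p) m]
  linarith

theorem half_lt_binCDF {n m : ℕ} {p : ℝ} (hm : 0 < m) (hmn : m < n) (hp : n * p = m) :
    1 / 2 < binCDF n m p := by
  have hsplit := sum_binWeight_add_add_binCDF n m p
  have hlower := binCDF_eq_sum_binWeight_one_sub (p := p) hmn.le
  rcases le_or_gt p (1 / 2) with hp2 | hp2
  · have hw := binWeight_pos (pos_of_mul_eq hm hp) (by linarith) hmn.le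
    linarith [sum_binWeight_add_le hmn.le hm hp hp2]
  have hq : (n : ℝ) * (1 - p) = (n - m : ℕ) := by rw [Nat.cast_sub hmn.le]; linarith
  have hp1 : p < 1 := by
    have : (m : ℝ) < n := by exact_mod_cast hmn
    nlinarith
  have hle := binWeight_one_sub_add_succ_le_binWeight_add (Nat.sub_le n m)
    (Nat.sub_pos_of_lt hmn) hq (by linarith)
  have hlt := binWeight_one_sub_add_one_lt (Nat.sub_le n m) (Nat.sub_pos_of_lt hmn) hq
    (by linarith)
  simp only [sub_sub_cancel, Nat.sub_sub_self hmn.le] at hle hlt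
  have hupper : ∑ k ∈ range n, binWeight n p (m + (k + 1)) <
      ∑ k ∈ range n, binWeight n (1 - p) (n - m + k) :=
    sum_lt_sum (fun k _ => hle k) ⟨0, mem_range.2 (by omega), by simpa using hlt⟩
  rw [sum_range_succ'] at hsplit
  rw [sum_range_succ] at hlower
  have := binWeight_nonneg (n := n) (p := 1 - p) (i := n - m + n) (by linarith) (by linarith)
  simp only [add_zero] at hsplit
  linarith

theorem stmt_10 (lam δ : ℝ) (hlam0 : 0 < lam) (hlam1 : lam < 1)
    (hδ0 : 0 < δ) (hδ : δ ≤ 1 / 2) (l : ℕ) :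
    (l : ℝ) / (1 - lam) ≤ (zStar l δ lam : ℝ) := by
  have hν : 0 < 1 - lam := by linarith
  obtain ⟨z₀, hz₀, hlz₀⟩ := (((tendsto_binCDF_atTop_zero l hν (by linarith)).eventually
    (gt_mem_nhds hδ0)).and (eventually_ge_atTop l)).exists
  obtain ⟨hlz, hzδ⟩ : l ≤ zStar l δ lam ∧ binCDF (zStar l δ lam) l (1 - lam) ≤ δ :=
    Nat.sInf_mem (s := {z | l ≤ z ∧ binCDF z l (1 - lam) ≤ δ}) ⟨z₀, hlz₀, hz₀.le⟩
  set z := zStar l δ lam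
  rw [div_le_iff₀ hν]
  by_contra! hzl
  have hl : 0 < l := by
    have : (0 : ℝ) < l := lt_of_le_of_lt (by positivity) hzl
    exact_mod_cast this
  have hlz' : l < z := lt_of_le_of_ne hlz fun h => by
    rw [← h, binCDF_of_le le_rfl] at hzδ; linarith
  have hz : (0 : ℝ) < z := by exact_mod_cast hl.trans hlz'
  have hmedian := half_lt_binCDF hl hlz' (p := l / z) (by field_simp)
  have hmono := antitoneOn_binCDF z l (a := 1 - lam) (b := l / z) ⟨hν.le, by linarith⟩
    ⟨by positivity, (div_le_one hz).2 (by exact_mod_cast hlz)⟩ ((le_div_iff₀ hz).2 (by linarith))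
  linarith
end

section
/- For a fixed integer l ≥ 0 and 0 < λ < 1, ν = 1-λ, let z*(δ) = min{z ≥ l : B_{z,l}(ν) ≤ δ}. Then z*(δ)/ln δ → 1/ln λ as δ → 0⁺. -/
/-!
Keeping only the `j = 0` term gives `λ^z ≤ B_{z,l}(1-λ)`, while every term is at most
`z^l λ^(z-l)`, so `B_{z,l}(1-λ) ≤ μ^z` for large `z` whenever `λ < μ`. Hence `B_{z,l}(1-λ)` decays
exactly at the exponential rate `λ`, and the first index at which a sequence with this rate drops
below `δ` is `ln δ / ln λ + o(ln δ)`.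
-/

open Filter

open Topology Real

section FirstPassage

noncomputable def firstPassage (a : ℕ → ℝ) (l : ℕ) (δ : ℝ) : ℕ :=
  sInf {z : ℕ | l ≤ z ∧ a z ≤ δ}

variable {a : ℕ → ℝ} {lam μ δ : ℝ} {l N : ℕ}

lemma div_log_le_inv_log_of_pow_le (hlam0 : 0 < lam) (hlam1 : lam < 1) (hδ1 : δ < 1) {z : ℕ}
    (hz : lam ^ z ≤ δ) : (z : ℝ) / log δ ≤ 1 / log lam := by
  have hδlog : log δ < 0 := log_neg ((pow_pos hlam0 z).trans_le hz) hδ1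
  have hz_log : z * log lam ≤ log δ := by
    rw [← log_pow]; exact log_le_log (pow_pos hlam0 z) hz
  rw [div_le_iff_of_neg hδlog, one_div_mul_eq_div, div_le_iff_of_neg (log_neg hlam0 hlam1)]
  exact hz_log

lemma pow_le_of_ge_log_div_log (hμ0 : 0 < μ) (hμ1 : μ < 1) (hδ0 : 0 < δ) {m : ℕ}
    (hm : log δ / log μ ≤ m) : μ ^ m ≤ δ := by
  rw [div_le_iff_of_neg (log_neg hμ0 hμ1)] at hm
  rw [← log_le_log_iff (pow_pos hμ0 m) hδ0, log_pow]
  exact hm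

lemma add_ceil_mem_passage (hμ0 : 0 < μ) (hμ1 : μ < 1) (hlN : l ≤ N)
    (hN : ∀ z ≥ N, a z ≤ μ ^ z) (hδ0 : 0 < δ) :
    N + ⌈log δ / log μ⌉₊ ∈ {z : ℕ | l ≤ z ∧ a z ≤ δ} := by
  refine ⟨hlN.trans (Nat.le_add_right _ _), (hN _ (Nat.le_add_right _ _)).trans ?_⟩
  refine pow_le_of_ge_log_div_log hμ0 hμ1 hδ0 ?_
  push_cast
  linarith [Nat.le_ceil (log δ / log μ), (N.cast_nonneg : (0 : ℝ) ≤ N)]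

lemma exists_ge_forall_ge_le_pow (h : ∀ᶠ z in atTop, a z ≤ μ ^ z) (l : ℕ) :
    ∃ N, l ≤ N ∧ ∀ z ≥ N, a z ≤ μ ^ z := by
  obtain ⟨N, hN⟩ := eventually_atTop.1 h
  exact ⟨max N l, le_max_right _ _, fun z hz => hN z (le_of_max_le_left hz)⟩

theorem tendsto_firstPassage_div_log (hlam0 : 0 < lam) (hlam1 : lam < 1)
    (hlow : ∀ z, lam ^ z ≤ a z) (hup : ∀ μ, lam < μ → ∀ᶠ z in atTop, a z ≤ μ ^ z) (l : ℕ) :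
    Tendsto (fun δ : ℝ => (firstPassage a l δ : ℝ) / log δ) (𝓝[>] 0)
      (𝓝 (1 / log lam)) := by
  have hsmall : ∀ᶠ δ in 𝓝[>] (0 : ℝ), δ ∈ Set.Ioo 0 1 := Ioo_mem_nhdsGT one_pos
  rw [tendsto_order]
  constructor
  · intro b hb
    have hcont : ContinuousAt (fun μ => 1 / log μ) lam :=
      continuousAt_const.div (continuousAt_log hlam0.ne') (log_neg hlam0 hlam1).ne
    have hnear : ∀ᶠ μ in 𝓝 lam, b < 1 / log μ ∧ μ < 1 :=
      (hcont.eventually_const_lt hb).and (gt_mem_nhds hlam1)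
    obtain ⟨μ, ⟨hbμ, hμ1⟩, hlamμ⟩ :=
      ((hnear.filter_mono nhdsWithin_le_nhds).and (self_mem_nhdsWithin (s := Set.Ioi lam))).exists
    have hμ0 : 0 < μ := hlam0.trans hlamμ
    obtain ⟨N, hlN, hN⟩ := exists_ge_forall_ge_le_pow (hup μ hlamμ) l
    have hbound : Tendsto (fun δ => (N + 1 : ℝ) / log δ + 1 / log μ) (𝓝[>] 0)
        (𝓝 (1 / log μ)) := by
      simpa using (tendsto_const_nhds.div_atBot tendsto_log_nhdsGT_zero).add_const (1 / log μ)
    filter_upwards [hbound.eventually_const_lt hbμ, hsmall] with δ hbδ ⟨hδ0, hδ1⟩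
    have hδlog : log δ < 0 := log_neg hδ0 hδ1
    have hle : firstPassage a l δ ≤ N + ⌈log δ / log μ⌉₊ :=
      Nat.sInf_le (add_ceil_mem_passage hμ0 hμ1 hlN hN hδ0)
    calc b < (N + 1 : ℝ) / log δ + 1 / log μ := hbδ
      _ = (N + 1 + log δ / log μ) / log δ := by
        field_simp [hδlog.ne, (log_neg hμ0 hμ1).ne]
      _ ≤ _ := by
        refine div_le_div_of_nonpos_of_le hδlog.le ?_
        have hceil := Nat.ceil_lt_add_one (div_nonneg_of_nonpos hδlog.le (log_neg hμ0 hμ1).le)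
        have hle' : (firstPassage a l δ : ℝ) ≤ N + ⌈log δ / log μ⌉₊ := by
          exact_mod_cast hle
        linarith
  · intro b hb
    have hμ : lam < (lam + 1) / 2 := by linarith
    obtain ⟨N, hlN, hN⟩ := exists_ge_forall_ge_le_pow (hup _ hμ) l
    filter_upwards [hsmall] with δ ⟨hδ0, hδ1⟩
    have hmem := Nat.sInf_mem ⟨_, add_ceil_mem_passage (by linarith) (by linarith) hlN hN hδ0⟩
    exact (div_log_le_inv_log_of_pow_le hlam0 hlam1 hδ1 ((hlow _).trans hmem.2)).trans_lt hb

end FirstPassage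

section BinomialTail

variable {lam : ℝ} (z l : ℕ)

lemma pow_le_binCDF (hlam0 : 0 ≤ lam) (hlam1 : lam ≤ 1) : lam ^ z ≤ binCDF z l (1 - lam) := by
  have hterm := Finset.single_le_sum
    (f := fun j => (z.choose j : ℝ) * (1 - lam) ^ j * (1 - (1 - lam)) ^ (z - j))
    (fun j _ => by
      have : 0 ≤ 1 - lam := by linarith
      simp only [sub_sub_cancel]
      positivity)
    (Finset.mem_range.2 (Nat.succ_pos l))
  simpa [binCDF] using hterm

lemma binCDF_le (hlam0 : 0 ≤ lam) (hlam1 : lam ≤ 1) (hz : 1 ≤ z) :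
    binCDF z l (1 - lam) ≤ (l + 1) * z ^ l * lam ^ (z - l) := by
  have hν0 : 0 ≤ 1 - lam := by linarith
  have hterm : ∀ j ∈ Finset.range (l + 1),
      (z.choose j : ℝ) * (1 - lam) ^ j * (1 - (1 - lam)) ^ (z - j) ≤ z ^ l * 1 * lam ^ (z - l) := by
    intro j hj
    have hjl : j ≤ l := Nat.lt_succ_iff.1 (Finset.mem_range.1 hj)
    rw [sub_sub_cancel]
    gcongr ?_ * ?_ * ?_
    · calc (z.choose j : ℝ) ≤ (z : ℝ) ^ j := by exact_mod_cast z.choose_le_pow j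
        _ ≤ (z : ℝ) ^ l := pow_le_pow_right₀ (by exact_mod_cast hz) hjl
    · exact pow_le_one₀ hν0 (by linarith)
    · exact pow_le_pow_of_le_one hlam0 hlam1 (Nat.sub_le_sub_left hjl z)
  calc binCDF z l (1 - lam) ≤ ∑ _j ∈ Finset.range (l + 1), (z : ℝ) ^ l * 1 * lam ^ (z - l) :=
        Finset.sum_le_sum hterm
    _ = (l + 1) * z ^ l * lam ^ (z - l) := by
        rw [Finset.sum_const, Finset.card_range, nsmul_eq_mul]; push_cast; ring

lemma eventually_binCDF_le_pow (hlam0 : 0 < lam) (hlam1 : lam ≤ 1) {μ : ℝ} (hμ : lam < μ) :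
    ∀ᶠ z in atTop, binCDF z l (1 - lam) ≤ μ ^ z := by
  have hμ0 : 0 < μ := hlam0.trans hμ
  have hr : |lam / μ| < 1 := by
    rw [abs_of_pos (div_pos hlam0 hμ0), div_lt_one hμ0]; exact hμ
  have hsmall := ((tendsto_pow_const_mul_const_pow_of_abs_lt_one l hr).const_mul
    ((l + 1) / lam ^ l)).eventually_le_const (by simp : ((l + 1) / lam ^ l) * (0 : ℝ) < 1)
  filter_upwards [hsmall, eventually_ge_atTop (max 1 l)] with z hz hzl
  have hlz : l ≤ z := le_of_max_le_right hzl
  have hsplit : (l + 1) * (z : ℝ) ^ l * lam ^ (z - l)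
      = ((l + 1) / lam ^ l) * ((z : ℝ) ^ l * (lam / μ) ^ z) * μ ^ z := by
    rw [div_pow, pow_sub₀ lam hlam0.ne' hlz]
    field_simp
  calc binCDF z l (1 - lam) ≤ (l + 1) * (z : ℝ) ^ l * lam ^ (z - l) :=
        binCDF_le z l hlam0.le hlam1 (le_of_max_le_left hzl)
    _ = ((l + 1) / lam ^ l) * ((z : ℝ) ^ l * (lam / μ) ^ z) * μ ^ z := hsplit
    _ ≤ 1 * μ ^ z := by gcongr
    _ = μ ^ z := one_mul _

end BinomialTail

theorem stmt_11 (lam : ℝ) (hlam0 : 0 < lam) (hlam1 : lam < 1) (l : ℕ) :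
    Tendsto (fun δ : ℝ => (zStar l δ lam : ℝ) / Real.log δ)
      (nhdsWithin 0 (Set.Ioi 0)) (nhds (1 / Real.log lam)) :=
  tendsto_firstPassage_div_log hlam0 hlam1 (fun z => pow_le_binCDF z l hlam0.le hlam1.le)
    (fun _ hμ => eventually_binCDF_le_pow l hlam0 hlam1.le hμ) l
end

section
/- Let Q be a permutation-invariant probability distribution on {0,1}^{n+1}, Z = Σ_{i=1}^{n+1} Y_i, and L the number of failures among U_1,...,U_n, where each U_i is obtained from Y_i by flipping 1 to 0 with probability λ independently (U_i = 0 if Y_i = 0; U_i = 0 with prob. λ and 1 with prob. 1-λ if Y_i = 1). Then for l+1 ≤ z ≤ n+1, Q(L ≤ l | Z = z) = ((n-z+1) B_{z,l}(ν) + z B_{z-1,l}(ν))/(n+1), where ν = 1-λ. -/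
/-- The number of ones among the first `n` coordinates of `y : Fin (n+1) → Bool`. -/
def onesFirst (n : ℕ) (y : Fin (n + 1) → Bool) : ℕ :=
  (Finset.univ.filter (fun i : Fin (n + 1) => i.val < n ∧ y i = true)).card

open Finset

section
variable {α : Type*} [Fintype α] [DecidableEq α]

lemma sum_filter_card_true_eq_sum_powersetCard {M : Type*} [AddCommMonoid M] (k : ℕ)
    (f : (α → Bool) → M) :
    ∑ y with #{i | y i = true} = k, f y = ∑ s ∈ powersetCard k univ, f (fun i => decide (i ∈ s)) :=
  sum_nbij' (fun y => univ.filter (y · = true)) (fun s i => decide (i ∈ s))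
    (by simp +contextual [mem_powersetCard]) (by simp +contextual [mem_powersetCard])
    (by simp) (by simp) (by simp)

lemma filter_powersetCard_notMem (a : α) (k : ℕ) :
    {s ∈ powersetCard k (univ : Finset α) | a ∉ s} = powersetCard k (univ.erase a) := by
  ext s
  simp only [mem_filter, mem_powersetCard, subset_erase, subset_univ, true_and, and_comm]

lemma card_filter_powersetCard_notMem (a : α) (k : ℕ) :
    #{s ∈ powersetCard k univ | a ∉ s} = (Fintype.card α - 1).choose k := by
  rw [filter_powersetCard_notMem, card_powersetCard, card_erase_of_mem (mem_univ a), card_univ]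

lemma card_filter_powersetCard_mem_add_choose (a : α) (k : ℕ) :
    #{s ∈ powersetCard k univ | a ∈ s} + (Fintype.card α - 1).choose k
      = (Fintype.card α).choose k := by
  rw [← card_filter_powersetCard_notMem a, card_filter_add_card_filter_not, card_powersetCard,
    card_univ]

lemma sum_powersetCard_card_erase {M : Type*} [AddCommMonoid M] (a : α) (k : ℕ) (f : ℕ → M) :
    ∑ s ∈ powersetCard k univ, f #(s.erase a)
      = #{s ∈ powersetCard k univ | a ∈ s} • f (k - 1)
        + #{s ∈ powersetCard k univ | a ∉ s} • f k := by
  rw [← sum_filter_add_sum_filter_not _ (a ∈ ·), ← sum_const, ← sum_const]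
  congr 1 <;> refine sum_congr rfl fun s hs => ?_ <;> simp only [mem_filter, mem_powersetCard] at hs
  · rw [card_erase_of_mem hs.2, hs.1.2]
  · rw [erase_eq_of_notMem hs.2, hs.1.2]
end

lemma onesFirst_eq_card_erase_last (n : ℕ) (s : Finset (Fin (n + 1))) :
    onesFirst n (fun i => decide (i ∈ s)) = #(s.erase (Fin.last n)) := by
  unfold onesFirst
  congr 1
  ext i
  simp [← Fin.lt_last_iff_ne_last, Fin.lt_def]

theorem stmt_13_general (n l z : ℕ) (lam : ℝ) (hz2 : z ≤ n + 1) :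
    (∑ y ∈ Finset.univ.filter
        (fun y : Fin (n + 1) → Bool =>
          (Finset.univ.filter (fun i => y i = true)).card = z),
        binCDF (onesFirst n y) l (1 - lam)) / ((n + 1).choose z : ℝ)
      = (((n : ℝ) - z + 1) * binCDF z l (1 - lam)
          + (z : ℝ) * binCDF (z - 1) l (1 - lam)) / ((n : ℝ) + 1) := by
  rw [sum_filter_card_true_eq_sum_powersetCard]
  simp_rw [onesFirst_eq_card_erase_last]
  rw [sum_powersetCard_card_erase (Fin.last n) z fun k => binCDF k l (1 - lam),
    card_filter_powersetCard_notMem, Fintype.card_fin, Nat.add_sub_cancel, nsmul_eq_mul,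
    nsmul_eq_mul]
  have hsplit : (#{s ∈ powersetCard z univ | Fin.last n ∈ s} : ℝ) + n.choose z
      = (n + 1).choose z := by
    have := card_filter_powersetCard_mem_add_choose (Fin.last n) z
    rw [Fintype.card_fin, Nat.add_sub_cancel] at this
    exact_mod_cast this
  have hmul : (n.choose z : ℝ) * (n + 1) = (n + 1).choose z * ((n : ℝ) - z + 1) := by
    rw [sub_add_eq_add_sub, ← Nat.cast_add_one, ← Nat.cast_sub hz2]
    exact_mod_cast Nat.choose_mul_succ_eq n z
  have hpos : ((n + 1).choose z : ℝ) ≠ 0 := by exact_mod_cast (Nat.choose_pos hz2).ne'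
  field_simp
  linear_combination ((n : ℝ) + 1) * binCDF (z - 1) l (1 - lam) * hsplit
    + (binCDF z l (1 - lam) - binCDF (z - 1) l (1 - lam)) * hmul

/-- Conditioned on `Z = z` the exchangeable distribution is uniform over weight-`z`
binary strings, and given a string whose first `n` coordinates contain `k` ones,
`P(L ≤ l) = B_{k,l}(ν)`.  Hence
`Q(L ≤ l | Z = z) = (∑_{|y| = z} B_{onesFirst y, l}(ν)) / C(n+1,z)`, and this equals
`((n-z+1) B_{z,l}(ν) + z B_{z-1,l}(ν)) / (n+1)` for `l+1 ≤ z ≤ n+1`. -/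
theorem stmt_13 (n l z : ℕ) (lam : ℝ) (hlam0 : 0 < lam) (hlam1 : lam < 1)
    (hz1 : l + 1 ≤ z) (hz2 : z ≤ n + 1) :
    (∑ y ∈ Finset.univ.filter
        (fun y : Fin (n + 1) → Bool =>
          (Finset.univ.filter (fun i => y i = true)).card = z),
        binCDF (onesFirst n y) l (1 - lam)) / ((n + 1).choose z : ℝ)
      = (((n : ℝ) - z + 1) * binCDF z l (1 - lam)
          + (z : ℝ) * binCDF (z - 1) l (1 - lam)) / ((n : ℝ) + 1) :=
  stmt_13_general n l z lam hz2
end
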